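/- Let K be a finite Galois extension of L of degree n, where L is a field containing 𝔽_q. Then K[τ], viewed as a left L[τ]-module via the inclusion L[τ] ⊂ K[τ], is free of rank n. -/

import Mathlib

noncomputable section

open scoped TensorProduct

namespace DS

/-! ### Skew polynomial rings -/

section SkewPoly

variable {R : Type*} [Ring R]

/-- The skew polynomial ring `R[τ; σ]`: finitely supported sequences of coefficients,
with multiplication twisted by the ring endomorphism `σ`, so that `τ b = σ(b) τ`. -/
def SkewPoly (R : Type*) [Ring R] (_σ : R →+* R) : Type _ := ℕ →₀ R

namespace SkewPoly

variable {σ : R →+* R}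

instance : AddCommGroup (SkewPoly R σ) := inferInstanceAs (AddCommGroup (ℕ →₀ R))

instance {S : Type*} [Semiring S] [Module S R] : Module S (SkewPoly R σ) :=
  inferInstanceAs (Module S (ℕ →₀ R))

/-- The underlying finitely supported function of coefficients. -/
def toFinsupp (f : SkewPoly R σ) : ℕ →₀ R := f

/-- The `n`-th coefficient of a skew polynomial. -/
def coeff (f : SkewPoly R σ) (n : ℕ) : R := toFinsupp f n

/-- The skew polynomial `a·τ^n`. -/
def single (σ : R →+* R) (n : ℕ) (a : R) : SkewPoly R σ := Finsupp.single n a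

private def mulAux (σ : R →+* R) (f g : ℕ →₀ R) : ℕ →₀ R :=
  f.sum fun i a => g.sum fun j b => Finsupp.single (i + j) (a * (⇑σ)^[i] b)

private lemma mulAux_zero (σ : R →+* R) (f : ℕ →₀ R) : mulAux σ f 0 = 0 := by
  simp [mulAux]

private lemma zero_mulAux (σ : R →+* R) (f : ℕ →₀ R) : mulAux σ 0 f = 0 := by
  simp [mulAux]

private lemma mulAux_add (σ : R →+* R) (f g h : ℕ →₀ R) :
    mulAux σ f (g + h) = mulAux σ f g + mulAux σ f h := by
  unfold mulAux
  rw [← Finsupp.sum_add]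
  refine Finsupp.sum_congr fun i _ => ?_
  rw [Finsupp.sum_add_index]
  · intro j _
    simp
  · intro j _ b₁ b₂
    simp [mul_add, Finsupp.single_add]

private lemma add_mulAux (σ : R →+* R) (f g h : ℕ →₀ R) :
    mulAux σ (f + g) h = mulAux σ f h + mulAux σ g h := by
  unfold mulAux
  rw [Finsupp.sum_add_index]
  · intro i _
    simp
  · intro i _ a₁ a₂
    rw [← Finsupp.sum_add]
    refine Finsupp.sum_congr fun j _ => ?_
    simp [add_mul, Finsupp.single_add]

private lemma single_mulAux_single (σ : R →+* R) (i j : ℕ) (a b : R) :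
    mulAux σ (Finsupp.single i a) (Finsupp.single j b)
      = Finsupp.single (i + j) (a * (⇑σ)^[i] b) := by
  unfold mulAux
  rw [Finsupp.sum_single_index, Finsupp.sum_single_index]
  · simp
  · rw [Finsupp.sum_single_index] <;> simp

private lemma mulAux_assoc (σ : R →+* R) (f g h : ℕ →₀ R) :
    mulAux σ (mulAux σ f g) h = mulAux σ f (mulAux σ g h) := by
  induction f using Finsupp.induction_linear with
  | zero => simp [zero_mulAux]
  | add f₁ f₂ hf₁ hf₂ => simp [add_mulAux, hf₁, hf₂]
  | single i a =>
    induction g using Finsupp.induction_linear with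
    | zero => simp [zero_mulAux, mulAux_zero]
    | add g₁ g₂ hg₁ hg₂ => simp [add_mulAux, mulAux_add, hg₁, hg₂]
    | single j b =>
      induction h using Finsupp.induction_linear with
      | zero => simp [mulAux_zero]
      | add h₁ h₂ hh₁ hh₂ => simp [mulAux_add, hh₁, hh₂]
      | single k c =>
        rw [single_mulAux_single, single_mulAux_single, single_mulAux_single,
          single_mulAux_single]
        rw [add_assoc, mul_assoc]
        congr 2
        rw [Function.iterate_add_apply]
        rw [iterate_map_mul]

instance instRing : Ring (SkewPoly R σ) :=
  { (inferInstance : AddCommGroup (SkewPoly R σ)) with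
    mul := fun f g => (mulAux σ (toFinsupp f) (toFinsupp g) : SkewPoly R σ)
    one := (Finsupp.single 0 1 : ℕ →₀ R)
    mul_assoc := fun f g h => mulAux_assoc σ f g h
    one_mul := fun f => by
      show mulAux σ (Finsupp.single 0 1) f = f
      unfold mulAux
      rw [Finsupp.sum_single_index]
      · simp <;> exact Finsupp.sum_single _
      · simp <;> exact Finset.sum_const_zero
    mul_one := fun f => by
      show mulAux σ f (Finsupp.single 0 1) = f
      unfold mulAux
      refine Eq.trans (Finsupp.sum_congr fun i _ => ?_) (Finsupp.sum_single _)
      rw [Finsupp.sum_single_index] <;> simp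
    left_distrib := fun f g h => mulAux_add σ f g h
    right_distrib := fun f g h => add_mulAux σ f g h
    zero_mul := fun f => zero_mulAux σ f
    mul_zero := fun f => mulAux_zero σ f }

lemma mul_def (f g : SkewPoly R σ) :
    f * g = (mulAux σ (toFinsupp f) (toFinsupp g) : SkewPoly R σ) := rfl

/-- Push a skew polynomial along a map of coefficient rings (applied coefficientwise). -/
def mapCoeffs {R' : Type*} [Ring R'] {σ' : R' →+* R'} (g : R →+* R') (f : SkewPoly R σ) :
    SkewPoly R' σ' := Finsupp.mapRange g g.map_zero (toFinsupp f)

end SkewPoly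

end SkewPoly



section Setup

variable (p e d : ℕ) [Fact p.Prime]

/-- The `q = p^e`-power Frobenius, applied entrywise to `d × d` matrices. -/
def matFrob (L : Type*) [Field L] [CharP L p] :
    Matrix (Fin d) (Fin d) L →+* Matrix (Fin d) (Fin d) L :=
  (iterateFrobenius L p e).mapMatrix

/-- The ring `M_d(L[τ])` of `d × d` matrices over the skew polynomial ring `L[τ]`
(realized as skew polynomials with matrix coefficients). -/
abbrev MdTau (L : Type*) [Field L] [CharP L p] :=
  SkewPoly (Matrix (Fin d) (Fin d) L) (matFrob p e d L)

variable {p e d}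

/-- The coordinates of the additive polynomial map `𝔾_a^d → 𝔾_a^d` defined by
`S ∈ M_d(L[τ])`. -/
def kerPolys {L : Type*} [Field L] [CharP L p] (S : MdTau p e d L) :
    Fin d → MvPolynomial (Fin d) L := fun j =>
  (SkewPoly.toFinsupp S).sum fun i B =>
    ∑ k : Fin d, MvPolynomial.C (B j k) * MvPolynomial.X k ^ (p ^ e) ^ i

/-- The ideal of the scheme-theoretic kernel of `S : 𝔾_a^d → 𝔾_a^d`. -/
def kerIdeal {L : Type*} [Field L] [CharP L p] (S : MdTau p e d L) :
    Ideal (MvPolynomial (Fin d) L) :=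
  Ideal.span (Set.range (kerPolys S))

/-- `S : 𝔾_a^d → 𝔾_a^d` has kernel a finite group scheme, i.e. the coordinate ring of its
scheme-theoretic kernel is a finite-dimensional vector space. -/
def HasFiniteKernel {L : Type*} [Field L] [CharP L p] (S : MdTau p e d L) : Prop :=
  Module.Finite L (MvPolynomial (Fin d) L ⧸ kerIdeal S)

/-- The order of the scheme-theoretic kernel of `S`, namely the dimension over `L` of the
coordinate ring of the kernel. -/
def kernelOrder {L : Type*} [Field L] [CharP L p] (S : MdTau p e d L) : ℕ :=
  Module.finrank L (MvPolynomial (Fin d) L ⧸ kerIdeal S)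

/-- Evaluation of `S ∈ M_d(L[τ])` on points of `𝔾_a^d` with values in an `L`-algebra `Ω`. -/
def actOn {L : Type*} [Field L] [CharP L p] (S : MdTau p e d L) (Ω : Type*) [CommRing Ω]
    [Algebra L Ω] (v : Fin d → Ω) : Fin d → Ω := fun j =>
  (SkewPoly.toFinsupp S).sum fun i B =>
    ∑ k : Fin d, algebraMap L Ω (B j k) * v k ^ (p ^ e) ^ i

end Setup

section Orders

variable (A : Type*) [CommRing A] (D : Type*) [Ring D] [Algebra A D]

/-- An `A`-order in the `A`-algebra (typically, the `F`-division algebra) `D`: an `A`-subalgebra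
which is finitely generated as an `A`-module and contains a common-denominator multiple of every
element of `D`. -/
def IsOrder (O : Subalgebra A D) : Prop :=
  (Subalgebra.toSubmodule O).FG ∧
    ∀ x : D, ∃ (s : A) (y : O), s ≠ 0 ∧ algebraMap A D s * x = (y : D)

/-- A maximal `A`-order in `D`. -/
def IsMaximalOrder (O : Subalgebra A D) : Prop :=
  IsOrder A D O ∧ ∀ O' : Subalgebra A D, IsOrder A D O' → O ≤ O' → O' = O

end Orders

section DrinfeldStuhler

variable {p e d : ℕ} [Fact p.Prime]
variable {A : Type*} [CommRing A] {D : Type*} [Ring D] [Algebra A D]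

/-- A Drinfeld–Stuhler `O_D`-module structure over the `A`-field `(L, γ)`:
an embedding `φ : O_D → M_d(L[τ])` such that for every nonzero `b ∈ O_D` the kernel of `φ_b` is
a finite group scheme over `L` of order `#(O_D/O_D·b)`, and such that the action of `A` on the
tangent space `Lie(𝔾_a^d)` is via `γ`. -/
structure IsDrinfeldStuhler (OD : Subalgebra A D) {L : Type*} [Field L] [CharP L p]
    (γ : A →+* L) (φ : OD →+* MdTau p e d L) : Prop where
  inj : Function.Injective φ
  ker_fin : ∀ b : OD, b ≠ 0 → HasFiniteKernel (φ b)
  ker_order : ∀ b : OD, b ≠ 0 →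
    kernelOrder (φ b) = Nat.card (OD ⧸ (Ideal.span {b} : Ideal OD))
  lie : ∀ a : A,
    SkewPoly.coeff (φ (algebraMap A OD a)) 0 = γ a • (1 : Matrix (Fin d) (Fin d) L)

end DrinfeldStuhler

section Splitting

variable {A : Type*} [CommRing A] [IsDomain A] [IsDedekindDomain A]
variable (F : Type*) [Field F] [Algebra A F] [IsFractionRing A F]
variable (D : Type*) [Ring D] [Algebra F D]
variable (d : ℕ)

open IsDedekindDomain

/-- The division algebra `D` splits at the finite place `v` of `F`, i.e. `D ⊗_F F_v` is a matrix
algebra over the completion `F_v`. -/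
def SplitsAt (v : HeightOneSpectrum A) : Prop :=
  letI : SMulCommClass F (v.adicCompletion F) (v.adicCompletion F) :=
    Algebra.to_smulCommClass
  letI : Algebra (v.adicCompletion F) ((v.adicCompletion F) ⊗[F] D) :=
    Algebra.TensorProduct.leftAlgebra
  Nonempty (((v.adicCompletion F) ⊗[F] D) ≃ₐ[v.adicCompletion F]
    Matrix (Fin d) (Fin d) (v.adicCompletion F))

/-- The `A`-characteristic `ker γ` of the `A`-field `(L, γ)` does not divide `𝔯(D)`:
it is either zero (generic characteristic) or a prime at which `D` is split. -/
def CharNotDividesRam {L : Type*} [Field L] (γ : A →+* L) : Prop :=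
  RingHom.ker γ = ⊥ ∨
    ∃ v : HeightOneSpectrum A, RingHom.ker γ = v.asIdeal ∧ SplitsAt F D d v

end Splitting


section Morphisms

variable {p e d : ℕ} [Fact p.Prime]
variable {A : Type*} [CommRing A] {D : Type*} [Ring D] [Algebra A D]
variable {OD : Subalgebra A D}
variable {L : Type*} [Field L] [CharP L p]

/-- A morphism `u : φ → ψ` of Drinfeld–Stuhler modules over `L`:
an element `u ∈ M_d(L[τ])` with `u φ_b = ψ_b u` for all `b ∈ O_D`. -/
def IsMorphism (φ ψ : OD →+* MdTau p e d L) (u : MdTau p e d L) : Prop :=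
  ∀ b : OD, u * φ b = ψ b * u

/-- `φ` and `ψ` are isomorphic Drinfeld–Stuhler modules over `L`. -/
def IsIsomorphic (φ ψ : OD →+* MdTau p e d L) : Prop :=
  ∃ u : (MdTau p e d L)ˣ, ∀ b : OD, (u : MdTau p e d L) * φ b = ψ b * (u : MdTau p e d L)

/-- The endomorphism ring `End_L(φ)`: the centralizer of `φ(O_D)` in `M_d(L[τ])`. -/
def EndRing (φ : OD →+* MdTau p e d L) : Subring (MdTau p e d L) :=
  Subring.centralizer (Set.range fun b : OD => φ b)

lemma mem_endRing_iff {φ : OD →+* MdTau p e d L} {x : MdTau p e d L} :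
    x ∈ EndRing φ ↔ ∀ b : OD, φ b * x = x * φ b := by
  unfold EndRing
  rw [Subring.mem_centralizer_iff]
  constructor
  · intro h b
    exact h _ ⟨b, rfl⟩
  · rintro h g ⟨b, rfl⟩
    exact h b

/-- The `A`-algebra structure map of `End_L(φ)`, `a ↦ φ_a`. -/
def endScalars (φ : OD →+* MdTau p e d L) : A →+* EndRing φ where
  toFun a := ⟨φ (algebraMap A OD a), mem_endRing_iff.mpr fun b => by
    rw [← map_mul, ← map_mul, Algebra.commutes]⟩
  map_one' := by
    ext
    simp
  map_mul' a b := by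
    ext
    simp [map_mul]
  map_zero' := by
    ext
    simp
  map_add' a b := by
    ext
    simp [map_add]

/-- `End_L(φ)` as an `A`-algebra. -/
def endAlgebra (φ : OD →+* MdTau p e d L) : Algebra A (EndRing φ) :=
  RingHom.toAlgebra' (endScalars φ) (by
    intro a x
    apply Subtype.ext
    rw [MulMemClass.coe_mul, MulMemClass.coe_mul]
    exact mem_endRing_iff.mp x.2 (algebraMap A OD a))

end Morphisms

section Places

/-- `K/F` is an imaginary extension relative to the distinguished place `∞` of `F` (given by its
valuation subring): there is exactly one place of `K` lying above `∞`. -/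
def IsImaginary {F : Type*} [Field F] (vinf : ValuationSubring F)
    (K : Type*) [Field K] [Algebra F K] : Prop :=
  ∃! w : ValuationSubring K, w.comap (algebraMap F K) = vinf

end Places

section MapCoeffsHom

variable {R R' : Type*} [Ring R] [Ring R'] {σ : R →+* R} {σ' : R' →+* R'}

namespace SkewPoly

private lemma iterate_compat (g : R →+* R') (hg : ∀ x, g (σ x) = σ' (g x)) :
    ∀ (i : ℕ) (b : R), g ((⇑σ)^[i] b) = (⇑σ')^[i] (g b) := by
  intro i
  induction i with
  | zero => intro b; simp
  | succ i ih =>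
    intro b
    rw [Function.iterate_succ_apply', Function.iterate_succ_apply', hg, ih]

private lemma mapRange_mulAux (g : R →+* R') (hg : ∀ x, g (σ x) = σ' (g x)) (f h : ℕ →₀ R) :
    Finsupp.mapRange g g.map_zero (mulAux σ f h) =
      mulAux σ' (Finsupp.mapRange g g.map_zero f) (Finsupp.mapRange g g.map_zero h) := by
  induction f using Finsupp.induction_linear with
  | zero => simp [zero_mulAux]
  | add f₁ f₂ h₁ h₂ =>
    rw [add_mulAux, Finsupp.mapRange_add g.map_add, Finsupp.mapRange_add g.map_add, add_mulAux,
      h₁, h₂]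
  | single i a =>
    induction h using Finsupp.induction_linear with
    | zero => simp [mulAux_zero]
    | add h₁ h₂ hh₁ hh₂ =>
      rw [mulAux_add, Finsupp.mapRange_add g.map_add, Finsupp.mapRange_add g.map_add, mulAux_add,
        hh₁, hh₂]
    | single j b =>
      rw [single_mulAux_single, Finsupp.mapRange_single, Finsupp.mapRange_single,
        Finsupp.mapRange_single, single_mulAux_single, map_mul, iterate_compat g hg]

/-- `mapCoeffs` as a ring homomorphism, given compatibility of the coefficient map with
the twists. -/
def mapCoeffsHom (g : R →+* R') (hg : ∀ x, g (σ x) = σ' (g x)) :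
    SkewPoly R σ →+* SkewPoly R' σ' where
  toFun := mapCoeffs g
  map_one' := by
    show Finsupp.mapRange g g.map_zero (Finsupp.single 0 1) = Finsupp.single 0 1
    rw [Finsupp.mapRange_single, map_one]
  map_mul' f h := mapRange_mulAux g hg f h
  map_zero' := by
    show Finsupp.mapRange g g.map_zero 0 = 0
    exact Finsupp.mapRange_zero
  map_add' f h := by
    show Finsupp.mapRange g g.map_zero (f + h) = _
    exact Finsupp.mapRange_add g.map_add f h

@[simp] lemma mapCoeffsHom_apply (g : R →+* R') (hg : ∀ x, g (σ x) = σ' (g x))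
    (f : SkewPoly R σ) : mapCoeffsHom g hg f = mapCoeffs g f := rfl

end SkewPoly

end MapCoeffsHom

section BaseChange

variable {p e d : ℕ} [Fact p.Prime]

lemma matFrob_compat {L L' : Type*} [Field L] [CharP L p] [Field L'] [CharP L' p]
    (g : L →+* L') (M : Matrix (Fin d) (Fin d) L) :
    g.mapMatrix (matFrob p e d L M) = matFrob p e d L' (g.mapMatrix M) := by
  ext i j
  simp only [matFrob, RingHom.mapMatrix_apply, Matrix.map_apply, iterateFrobenius_def, map_pow]

/-- Base change of `M_d(L[τ])` along a field embedding `L → L'`. -/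
def baseChangeHom {L L' : Type*} [Field L] [CharP L p] [Field L'] [CharP L' p]
    (g : L →+* L') : MdTau p e d L →+* MdTau p e d L' :=
  SkewPoly.mapCoeffsHom g.mapMatrix (matFrob_compat g)

end BaseChange

section EndF

variable {p e d : ℕ} [Fact p.Prime]
variable {A : Type*} [CommRing A] {D : Type*} [Ring D] [Algebra A D]
variable {OD : Subalgebra A D} {L : Type*} [Field L] [CharP L p]
variable (F : Type*) [Field F] [Algebra A F]

/-- The `F`-algebra `End_L(φ) ⊗_A F`. -/
def EndF (φ : OD →+* MdTau p e d L) : Type _ :=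
  letI : Algebra A (EndRing φ) := endAlgebra φ
  F ⊗[A] ↥(EndRing φ)

noncomputable instance (φ : OD →+* MdTau p e d L) : Ring (EndF F φ) :=
  letI : Algebra A (EndRing φ) := endAlgebra φ
  (inferInstance : Ring (F ⊗[A] ↥(EndRing φ)))

noncomputable instance (φ : OD →+* MdTau p e d L) : Algebra F (EndF F φ) :=
  letI : Algebra A (EndRing φ) := endAlgebra φ
  (inferInstance : Algebra F (F ⊗[A] ↥(EndRing φ)))

/-- The canonical map `End_L(φ) → End_L(φ) ⊗_A F`. -/
noncomputable def endIncl (φ : OD →+* MdTau p e d L) : ↥(EndRing φ) →+* EndF F φ :=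
  letI : Algebra A (EndRing φ) := endAlgebra φ
  (Algebra.TensorProduct.includeRight (R := A) (A := F) (B := ↥(EndRing φ))).toRingHom

end EndF

section AdicBaseChange

open IsDedekindDomain

variable (Atil : Type*) [CommRing Atil] [IsDomain Atil] [IsDedekindDomain Atil]
variable (Ftil : Type*) [Field Ftil] [Algebra Atil Ftil] [IsFractionRing Atil Ftil]
variable (E : Type*) [Ring E] [Algebra Ftil E]
variable (Q : HeightOneSpectrum Atil)

/-- The base change `E ⊗_{F̃} F̃_Q` of an `F̃`-algebra `E` to the completion of `F̃` at the
finite place `Q`. -/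
def AdicBC : Type _ := (Q.adicCompletion Ftil) ⊗[Ftil] E

noncomputable instance : Ring (AdicBC Atil Ftil E Q) :=
  inferInstanceAs (Ring ((Q.adicCompletion Ftil) ⊗[Ftil] E))

noncomputable instance : Algebra (Q.adicCompletion Ftil) (AdicBC Atil Ftil E Q) :=
  letI : SMulCommClass Ftil (Q.adicCompletion Ftil) (Q.adicCompletion Ftil) :=
    Algebra.to_smulCommClass
  inferInstanceAs
    (Algebra (Q.adicCompletion Ftil) ((Q.adicCompletion Ftil) ⊗[Ftil] E))

end AdicBaseChange

section Statement

variable {p : ℕ} [Fact p.Prime] {e : ℕ}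
variable {L : Type*} [Field L] [CharP L p] [Algebra (GaloisField p e) L]

variable {K : Type*} [Field K] [CharP K p] [Algebra L K]

/-!
A basis `b` of `K/L`, viewed as constants, is a basis of `K[τ]` over `L[τ]`: the `n`-th
coefficient of `∑ xᵢ bᵢ` is `∑ (xᵢ)ₙ bᵢ^(qⁿ)`, and by separability the `bᵢ^(qⁿ)` again form a
basis of `K/L`.
-/

namespace SkewPoly

section Coeff

variable {R : Type*} [Ring R] {σ : R →+* R}

lemma ext {f g : SkewPoly R σ} (h : ∀ n, coeff f n = coeff g n) : f = g :=
  Finsupp.ext h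

lemma coeff_sum {ι : Type*} (s : Finset ι) (f : ι → SkewPoly R σ) (n : ℕ) :
    coeff (∑ i ∈ s, f i) n = ∑ i ∈ s, coeff (f i) n :=
  Finsupp.finsetSum_apply s f n

lemma coeff_mapCoeffs {R' : Type*} [Ring R'] {σ' : R' →+* R'} (g : R →+* R')
    (f : SkewPoly R σ) (n : ℕ) : coeff (mapCoeffs g f : SkewPoly R' σ') n = g (coeff f n) :=
  Finsupp.mapRange_apply (hf := g.map_zero)

lemma coeff_mul_single_zero (f : SkewPoly R σ) (c : R) (n : ℕ) :
    coeff (f * single σ 0 c) n = coeff f n * (⇑σ)^[n] c := by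
  show (mulAux σ (toFinsupp f) (Finsupp.single 0 c)) n = toFinsupp f n * (⇑σ)^[n] c
  have single_mul_single_zero (i : ℕ) (a : R) :
      (Finsupp.single 0 c).sum (fun j b => Finsupp.single (i + j) (a * (⇑σ)^[i] b)) =
        Finsupp.single i (a * (⇑σ)^[i] c) := by
    simp
  simp only [mulAux, single_mul_single_zero]
  rw [Finsupp.sum_apply, Finsupp.sum, Finset.sum_eq_single n]
  · exact Finsupp.single_eq_same
  · exact fun i _ hin => Finsupp.single_eq_of_ne (Ne.symm hin)
  · intro hn
    simp [Finsupp.notMem_support_iff.mp hn]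

end Coeff

section FreeOverBase

variable {R S : Type*} [CommRing R] [Ring S] [Algebra R S] {σR : R →+* R} {σS : S →+* S}
variable {ι : Type*} [Fintype ι]

lemma coeff_sum_mapCoeffs_mul_single_zero (b : ι → S) (x : ι → SkewPoly R σR) (n : ℕ) :
    coeff (∑ i, (mapCoeffs (algebraMap R S) (x i) : SkewPoly S σS) * single σS 0 (b i)) n =
      ∑ i, coeff (x i) n • (⇑σS)^[n] (b i) := by
  simp only [coeff_sum, coeff_mul_single_zero, coeff_mapCoeffs, Algebra.smul_def]

theorem bijective_sum_mapCoeffs_mul_single_zero (b : ι → S)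
    (hb : ∀ n, ∃ v : Module.Basis ι R S, ⇑v = (⇑σS)^[n] ∘ b) :
    Function.Bijective fun x : ι → SkewPoly R σR =>
      ∑ i, (mapCoeffs (algebraMap R S) (x i) : SkewPoly S σS) * single σS 0 (b i) := by
  choose v hv using hb
  have coeff_eq (x : ι → SkewPoly R σR) (n : ℕ) :
      coeff (∑ i, (mapCoeffs (algebraMap R S) (x i) : SkewPoly S σS) * single σS 0 (b i)) n =
        ∑ i, coeff (x i) n • v n i := by
    simp only [coeff_sum_mapCoeffs_mul_single_zero, hv, Function.comp_apply]
  refine ⟨fun x y hxy => funext fun i => ext fun n => ?_, fun g => ?_⟩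
  · have hn := congrArg (fun f => (v n).repr (coeff f n) i) hxy
    simpa only [coeff_eq, (v n).repr_sum_self] using hn
  · have hsupp (i : ι) (n : ℕ) (hn : (v n).repr (coeff g n) i ≠ 0) :
        n ∈ (toFinsupp g).support := by
      contrapose! hn
      simp [coeff, Finsupp.notMem_support_iff.mp hn]
    refine ⟨fun i => (Finsupp.onFinset _ _ (hsupp i) : SkewPoly R σR), ext fun n =>
      (coeff_eq _ n).trans ((v n).sum_repr (coeff g n))⟩

end FreeOverBase

end SkewPoly

theorem exists_basis_coe_eq_iterate_iterateFrobenius_comp {F E ι : Type*} [Field F]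
    [Field E] [Algebra F E] [Algebra.IsSeparable F E] (q : ℕ) [ExpChar F q] [ExpChar E q]
    (b : Module.Basis ι F E) (e n : ℕ) :
    ∃ v : Module.Basis ι F E, ⇑v = (⇑(iterateFrobenius E q e))^[n] ∘ b := by
  refine ⟨b.mapPowExpCharPowOfIsSeparable q (e * n), funext fun i => ?_⟩
  rw [Module.Basis.mapPowExpCharPowOfIsSeparable, Module.Basis.coe_mk, Function.comp_apply,
    ← coe_iterateFrobenius_mul, iterateFrobenius_def]

theorem skewPoly_free_over_base_of_galois_general
    [IsGalois L K] [FiniteDimensional L K] :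
    ∃ m : Fin (Module.finrank L K) → SkewPoly K (iterateFrobenius K p e),
      Function.Bijective
        (fun x : Fin (Module.finrank L K) → SkewPoly L (iterateFrobenius L p e) =>
          ∑ i, (SkewPoly.mapCoeffs (algebraMap L K) (x i) :
            SkewPoly K (iterateFrobenius K p e)) * m i) :=
  let b := Module.finBasis L K
  ⟨fun i => SkewPoly.single _ 0 (b i), SkewPoly.bijective_sum_mapCoeffs_mul_single_zero b
    (exists_basis_coe_eq_iterate_iterateFrobenius_comp p b e)⟩

/-- Let `K` be a finite Galois extension of `L` of degree `n`, where `L`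
contains `𝔽_q`. Then `K[τ]`, viewed as a left `L[τ]`-module via `L[τ] ⊂ K[τ]`, is free of
rank `n`. -/
theorem skewPoly_free_over_base_of_galois (he : 0 < e)
    [IsGalois L K] [FiniteDimensional L K] :
    ∃ m : Fin (Module.finrank L K) → SkewPoly K (iterateFrobenius K p e),
      Function.Bijective
        (fun x : Fin (Module.finrank L K) → SkewPoly L (iterateFrobenius L p e) =>
          ∑ i, (SkewPoly.mapCoeffs (algebraMap L K) (x i) :
            SkewPoly K (iterateFrobenius K p e)) * m i) :=
  skewPoly_free_over_base_of_galois_general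

end Statement

end DS
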